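/- Let n ≥ 5 and let A be the n×n clamped-clamped beam matrix. Let T ∈ ℝ^{n×n} be the tridiagonal Toeplitz matrix with 2 on the diagonal and −1 on the first sub- and superdiagonals, and let U ∈ ℝ^{n×2} be the matrix whose first column is √2·e₁ and whose second column is √2·e_n (where e₁, e_n are the first and last standard basis vectors). Then A = T² + U Uᵗ. -/

import Mathlib

open scoped ENNReal
open Matrix

/-- The `n × n` clamped-clamped beam matrix (1-based index `i' = i+1`). -/
def A_CC (n : ℕ) : Matrix (Fin n) (Fin n) ℝ :=
  Matrix.of fun i j =>
    let i' := (i : ℕ) + 1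
    let j' := (j : ℕ) + 1
    if i' = j' then (if i' = 1 ∨ i' = n then 7 else 6)
    else if j' = i' + 1 ∨ i' = j' + 1 then -4
    else if j' = i' + 2 ∨ i' = j' + 2 then 1
    else 0

/-- The `n × n` tridiagonal Toeplitz matrix `tridiag(-1, 2, -1)`. -/
def Tmat (n : ℕ) : Matrix (Fin n) (Fin n) ℝ :=
  Matrix.of fun i j =>
    if (i : ℕ) = (j : ℕ) then 2
    else if (j : ℕ) = (i : ℕ) + 1 ∨ (i : ℕ) = (j : ℕ) + 1 then -1
    else 0

/-- The `n × 2` matrix whose columns are `√2·e₁` and `√2·eₙ`. -/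
noncomputable def Umat (n : ℕ) : Matrix (Fin n) (Fin 2) ℝ :=
  Matrix.of fun i k =>
    if k = 0 then (if (i : ℕ) = 0 then Real.sqrt 2 else 0)
    else (if (i : ℕ) = n - 1 then Real.sqrt 2 else 0)

/-! Since `T = 2I - (shift up) - (shift down)`, row `i` of `T²` is `2 Tᵢ - Tᵢ₊₁ - Tᵢ₋₁`, where a
missing neighbour row counts as zero. Away from the two corners this is the beam stencil
`(1, -4, 6, -4, 1)`; at the corner diagonal entries the missing row leaves `5` instead of `7`, and
`UUᵀ = 2 e₁e₁ᵀ + 2 eₙeₙᵀ` supplies the difference. -/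

def tridiagEntry (a b : ℕ) : ℝ :=
  if a = b then 2
  else if b = a + 1 ∨ a = b + 1 then -1
  else 0

lemma tridiagEntry_eq (a b : ℕ) :
    tridiagEntry a b =
      (if b = a then 2 else 0) - (if b = a + 1 then 1 else 0) - (if b + 1 = a then 1 else 0) := by
  unfold tridiagEntry
  split_ifs <;> first | omega | norm_num

lemma sum_range_tridiagEntry_mul {n a : ℕ} (ha : a < n) (g : ℕ → ℝ) :
    ∑ b ∈ Finset.range n, tridiagEntry a b * g b =
      2 * g a - (if a + 1 < n then g (a + 1) else 0) - (if 0 < a then g (a - 1) else 0) := by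
  have hpred : ∀ b, b + 1 = a ↔ 0 < a ∧ b = a - 1 := fun b => by omega
  have hpred_lt : a - 1 < n := by omega
  simp_rw [tridiagEntry_eq, sub_mul, ite_mul, zero_mul, one_mul, Finset.sum_sub_distrib, hpred,
    ite_and]
  simp [Finset.sum_ite_eq', Finset.sum_ite_irrel, ha, hpred_lt]

lemma Tmat_sq_apply {n : ℕ} (i j : Fin n) :
    (Tmat n ^ 2) i j =
      2 * tridiagEntry i j - (if (i : ℕ) + 1 < n then tridiagEntry (i + 1) j else 0)
        - (if 0 < (i : ℕ) then tridiagEntry (i - 1) j else 0) := by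
  rw [sq, mul_apply]
  exact (Fin.sum_univ_eq_sum_range (fun k => tridiagEntry i k * tridiagEntry k j) n).trans
    (sum_range_tridiagEntry_mul i.isLt _)

lemma Umat_mul_transpose_apply {n : ℕ} (i j : Fin n) :
    (Umat n * (Umat n)ᵀ) i j =
      (if (i : ℕ) = 0 ∧ (j : ℕ) = 0 then 2 else 0)
        + (if (i : ℕ) = n - 1 ∧ (j : ℕ) = n - 1 then 2 else 0) := by
  simp only [mul_apply, Fin.sum_univ_two, Umat, transpose_apply, of_apply]
  split_ifs <;> simp_all

/-- Rank-2 decomposition of the clamped-clamped beam matrix: `A = T² + U Uᵗ`. -/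
theorem A_CC_eq_Tsq_add_UUt (n : ℕ) (hn : 5 ≤ n) :
    A_CC n = Tmat n ^ 2 + Umat n * (Umat n)ᵀ := by
  ext ⟨a, ha⟩ ⟨b, hb⟩
  rw [Matrix.add_apply, Tmat_sq_apply, Umat_mul_transpose_apply]
  simp only [A_CC, of_apply]
  rcases (show b = a ∨ b = a + 1 ∨ a = b + 1 ∨ b = a + 2 ∨ a = b + 2 ∨ b + 3 ≤ a ∨ a + 3 ≤ b by
    omega) with rfl | rfl | rfl | rfl | rfl | hfar | hfar
  all_goals
    simp (disch := omega) only [tridiagEntry, if_pos, if_neg, if_true, true_or, or_true, ite_self]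
    (try split_ifs) <;> first | omega | norm_num
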